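/- Let a,b > 0, e < 1 and c,d be real, and let s > 1 and t > 1. Then I₂(s,t) := ∫_0^1 (∫_0^{1-v} u^{a-1} (s-u)^{c-1} (1-u-v)^{-e} du) v^{b-1} (t-v)^{d-1} dv = B(a,b,1-e) s^{c-1} t^{d-1} · F₃(a, b; 1-c, 1-d; a+b+1-e; 1/s, 1/t). -/

import Mathlib

open Real intervalIntegral

/-- The Pochhammer symbol `(a)_k = a(a+1)⋯(a+k-1) = Γ(a+k)/Γ(a)`. -/
noncomputable def poch (a : ℝ) (k : ℕ) : ℝ := ∏ i ∈ Finset.range k, (a + (i : ℝ))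

/-- The Beta function `B(x,y) = Γ(x)Γ(y)/Γ(x+y)`. -/
noncomputable def Beta2 (x y : ℝ) : ℝ := Real.Gamma x * Real.Gamma y / Real.Gamma (x + y)

/-- Extended Beta function `B(x,y,z) = Γ(x)Γ(y)Γ(z)/Γ(x+y+z)`. -/
noncomputable def Beta3 (x y z : ℝ) : ℝ :=
  Real.Gamma x * Real.Gamma y * Real.Gamma z / Real.Gamma (x + y + z)

/-- The third Appell hypergeometric function
`F₃(a₁,a₂; b₁,b₂; c; x,y) = Σ_{i,j} (a₁)_i(a₂)_j(b₁)_i(b₂)_j/((c)_{i+j} i! j!) xⁱ yʲ`. -/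
noncomputable def F3 (a₁ a₂ b₁ b₂ c x y : ℝ) : ℝ :=
  ∑' (i : ℕ) (j : ℕ),
    poch a₁ i * poch a₂ j * poch b₁ i * poch b₂ j /
      (poch c (i + j) * (Nat.factorial i : ℝ) * (Nat.factorial j : ℝ)) * x ^ i * y ^ j

/-!
Expand `(s - u)^(c-1) = Σᵢ s^(c-1) (1-c)ᵢ / i! (u/s)ⁱ` by the binomial series. Since
`0 ≤ u ≤ 1 < s` the coefficients are absolutely summable, so dominated convergence lets us
integrate termwise, and each term is a Beta integral: the inner integral becomes
`Σᵢ s^(c-1) (1-c)ᵢ / (i! sⁱ) B(a+i, 1-e) (1-v)^(a+i-e)`. Doing the same with `(t - v)^(d-1)`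
in the outer integral produces the double series with terms `B(a+i, 1-e) B(b+j, a+i+1-e)`,
and `Γ(x+n) = (x)ₙ Γ(x)` collapses this product to `B(a,b,1-e) (a)ᵢ (b)ⱼ / (a+b+1-e)ᵢ₊ⱼ`.
-/

open MeasureTheory Set

lemma poch_eq_ascPochhammer_eval (r : ℝ) (n : ℕ) : poch r n = (ascPochhammer ℝ n).eval r := by
  induction n with
  | zero => simp [poch]
  | succ n ih => rw [poch, Finset.prod_range_succ, ← poch, ih, ascPochhammer_succ_eval]

lemma choose_add_nat_sub_one_eq_poch (r : ℝ) (n : ℕ) :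
    Ring.choose (r + n - 1) n = poch r n / n.factorial := by
  rw [Ring.choose_eq_smul, smul_eq_mul, Polynomial.descPochhammer_smeval_eq_ascPochhammer,
    Polynomial.ascPochhammer_smeval_eq_eval, poch_eq_ascPochhammer_eval, inv_mul_eq_div]
  ring_nf

lemma mem_eball_zero_one_iff {x : ℝ} : x ∈ Metric.eball (0 : ℝ) 1 ↔ |x| < 1 := by
  rw [mem_eball_zero_iff, ← Real.norm_eq_abs, ← ofReal_norm, ENNReal.ofReal_lt_one]

lemma hasFPowerSeriesOnBall_one_sub_rpow_neg (r : ℝ) :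
    HasFPowerSeriesOnBall (fun x => (1 - x) ^ (-r))
      (.ofScalars ℝ fun n => poch r n / n.factorial) 0 1 := by
  have h := Real.one_div_one_sub_rpow_hasFPowerSeriesOnBall_zero r
  simp only [choose_add_nat_sub_one_eq_poch] at h
  refine h.congr fun x hx => ?_
  rw [mem_eball_zero_one_iff] at hx
  rw [Real.rpow_neg (by linarith [le_abs_self x])]
  exact one_div _

lemma hasSum_poch_div_factorial_mul_pow (r : ℝ) {x : ℝ} (hx : |x| < 1) :
    HasSum (fun n => poch r n / n.factorial * x ^ n) ((1 - x) ^ (-r)) := by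
  have := (hasFPowerSeriesOnBall_one_sub_rpow_neg r).hasSum (mem_eball_zero_one_iff.2 hx)
  simpa [FormalMultilinearSeries.ofScalars_apply_eq, mul_comm] using this

lemma summable_abs_poch_div_factorial_mul_pow (r : ℝ) {x : ℝ} (hx : |x| < 1) :
    Summable fun n => |poch r n / n.factorial * x ^ n| := by
  have hf := hasFPowerSeriesOnBall_one_sub_rpow_neg r
  have := FormalMultilinearSeries.summable_norm_apply _
    (Metric.eball_subset_eball hf.r_le (mem_eball_zero_one_iff.2 hx))
  simpa [FormalMultilinearSeries.ofScalars_apply_eq, mul_comm, abs_mul, abs_div] using this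

noncomputable def powSubCoeff (s γ : ℝ) (i : ℕ) : ℝ :=
  s ^ (γ - 1) * poch (1 - γ) i / (i.factorial * s ^ i)

lemma powSubCoeff_mul_pow {s : ℝ} (hs : 0 < s) (γ u : ℝ) (i : ℕ) :
    powSubCoeff s γ i * u ^ i = s ^ (γ - 1) * (poch (1 - γ) i / i.factorial * (u / s) ^ i) := by
  have : (i.factorial : ℝ) ≠ 0 := by positivity
  rw [powSubCoeff, div_pow]
  field_simp

lemma hasSum_powSubCoeff_mul_pow {s u : ℝ} (hs : 0 < s) (hu : |u| < s) (γ : ℝ) :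
    HasSum (fun i => powSubCoeff s γ i * u ^ i) ((s - u) ^ (γ - 1)) := by
  have hus : |u / s| < 1 := by rwa [abs_div, abs_of_pos hs, div_lt_one hs]
  have h1 : 0 ≤ 1 - u / s := by linarith [le_abs_self (u / s)]
  simp only [powSubCoeff_mul_pow hs]
  have := (hasSum_poch_div_factorial_mul_pow (1 - γ) hus).mul_left (s ^ (γ - 1))
  rwa [neg_sub, ← Real.mul_rpow hs.le h1, mul_one_sub, mul_div_cancel₀ _ hs.ne'] at this

lemma summable_abs_powSubCoeff {s : ℝ} (hs : 1 < s) (γ : ℝ) :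
    Summable fun i => |powSubCoeff s γ i| := by
  have hs0 : 0 < s := by linarith
  have h1s : |1 / s| < 1 := by rwa [abs_div, abs_one, abs_of_pos hs0, div_lt_one hs0]
  have := (summable_abs_poch_div_factorial_mul_pow (1 - γ) h1s).mul_left |s ^ (γ - 1)|
  simpa only [← abs_mul, ← powSubCoeff_mul_pow hs0, one_pow, mul_one] using this

lemma poch_pos {x : ℝ} (hx : 0 < x) (n : ℕ) : 0 < poch x n :=
  Finset.prod_pos fun _ _ => by positivity

lemma Gamma_add_nat_eq_poch_mul {x : ℝ} (hx : 0 < x) (n : ℕ) :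
    Real.Gamma (x + n) = poch x n * Real.Gamma x := by
  induction n with
  | zero => simp [poch]
  | succ n ih =>
    rw [Nat.cast_succ, ← add_assoc, Real.Gamma_add_one (by positivity), ih, poch, poch,
      Finset.prod_range_succ]
    ring

lemma Beta2_add_nat {p q : ℝ} (hp : 0 < p) (hq : 0 < q) (n : ℕ) :
    Beta2 (p + n) q = Beta2 p q * (poch p n / poch (p + q) n) := by
  have hpq : 0 < p + q := by linarith
  have : Real.Gamma (p + n + q) = poch (p + q) n * Real.Gamma (p + q) := by
    rw [add_right_comm, Gamma_add_nat_eq_poch_mul hpq]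
  rw [Beta2, Beta2, Gamma_add_nat_eq_poch_mul hp, this]
  have := (poch_pos hpq n).ne'
  have := (Real.Gamma_pos_of_pos hpq).ne'
  field_simp

lemma Beta2_pos {p q : ℝ} (hp : 0 < p) (hq : 0 < q) : 0 < Beta2 p q :=
  div_pos (mul_pos (Real.Gamma_pos_of_pos hp) (Real.Gamma_pos_of_pos hq))
    (Real.Gamma_pos_of_pos (add_pos hp hq))

lemma Beta2_add_nat_le {p q : ℝ} (hp : 0 < p) (hq : 0 < q) (n : ℕ) :
    Beta2 (p + n) q ≤ Beta2 p q := by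
  rw [Beta2_add_nat hp hq]
  refine mul_le_of_le_one_right (Beta2_pos hp hq).le ((div_le_one (poch_pos (by linarith) n)).2 ?_)
  exact Finset.prod_le_prod (fun i _ => by positivity) fun i _ => by linarith

lemma Beta2_mul_Beta2_add_nat {a b q : ℝ} (ha : 0 < a) (hb : 0 < b) (hq : 0 < q) (i j : ℕ) :
    Beta2 (a + i) q * Beta2 (b + j) (a + q + i) =
      Beta3 a b q * (poch a i * poch b j / poch (a + b + q) (i + j)) := by
  have haq : 0 < a + q := by linarith
  have habq : 0 < a + b + q := by linarith
  have h1 : Real.Gamma (a + i + q) = poch (a + q) i * Real.Gamma (a + q) := by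
    rw [add_right_comm, Gamma_add_nat_eq_poch_mul haq]
  have h2 :
      Real.Gamma (b + j + (a + q + i)) = poch (a + b + q) (i + j) * Real.Gamma (a + b + q) := by
    rw [← Gamma_add_nat_eq_poch_mul habq]; push_cast; ring_nf
  rw [Beta2, Beta2, Beta3, Gamma_add_nat_eq_poch_mul ha, Gamma_add_nat_eq_poch_mul hb, h1, h2,
    Gamma_add_nat_eq_poch_mul haq]
  have := (poch_pos haq i).ne'
  have := (poch_pos habq (i + j)).ne'
  have := (Real.Gamma_pos_of_pos haq).ne'
  have := (Real.Gamma_pos_of_pos habq).ne'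
  field_simp

lemma intervalIntegrable_rpow_mul_sub_rpow {p q w : ℝ} (hp : 0 < p) (hq : 0 < q) (hw : 0 < w) :
    IntervalIntegrable (fun u => u ^ (p - 1) * (w - u) ^ (q - 1)) volume 0 w := by
  have hleft : IntervalIntegrable (fun u => u ^ (p - 1) * (w - u) ^ (q - 1)) volume 0 (w / 2) := by
    refine (intervalIntegrable_rpow' (by linarith)).mul_continuousOn ?_
    refine ContinuousOn.rpow_const (by fun_prop) fun u hu => Or.inl ?_
    rw [uIcc_of_le (by linarith)] at hu
    linarith [hu.2]
  have hright : IntervalIntegrable (fun u => u ^ (p - 1) * (w - u) ^ (q - 1)) volume (w / 2) w := by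
    have := (intervalIntegrable_rpow' (a := w / 2) (b := 0) (r := q - 1)
      (by linarith)).comp_sub_left w
    rw [sub_half, sub_zero] at this
    refine this.continuousOn_mul (ContinuousOn.rpow_const (by fun_prop) fun u hu => Or.inl ?_)
    rw [uIcc_of_le (by linarith)] at hu
    linarith [hu.1]
  exact hleft.trans hright

lemma integral_rpow_mul_one_sub_rpow {p q : ℝ} (hp : 0 < p) (hq : 0 < q) :
    ∫ u in (0 : ℝ)..1, u ^ (p - 1) * (1 - u) ^ (q - 1) = Beta2 p q := by
  have hc := Complex.Gamma_mul_Gamma_eq_betaIntegral (s := p) (t := q)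
    (by simpa using hp) (by simpa using hq)
  have heq :
      Complex.betaIntegral p q = ↑(∫ u in (0 : ℝ)..1, u ^ (p - 1) * (1 - u) ^ (q - 1)) := by
    rw [Complex.betaIntegral, ← intervalIntegral.integral_ofReal]
    refine intervalIntegral.integral_congr fun u hu => ?_
    rw [uIcc_of_le zero_le_one] at hu
    simp only [Complex.ofReal_mul, Complex.ofReal_cpow hu.1,
      Complex.ofReal_cpow (sub_nonneg.2 hu.2)]
    push_cast; rfl
  rw [heq, ← Complex.ofReal_add, Complex.Gamma_ofReal, Complex.Gamma_ofReal,
    Complex.Gamma_ofReal] at hc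
  rw [Beta2, eq_div_iff (Real.Gamma_pos_of_pos (add_pos hp hq)).ne', mul_comm]
  exact_mod_cast hc.symm

lemma integral_rpow_mul_sub_rpow {p q w : ℝ} (hp : 0 < p) (hq : 0 < q) (hw : 0 < w) :
    ∫ u in (0 : ℝ)..w, u ^ (p - 1) * (w - u) ^ (q - 1) = Beta2 p q * w ^ (p + q - 1) := by
  rw [← mul_one w, ← mul_zero w, ← intervalIntegral.smul_integral_comp_mul_left, mul_one,
    smul_eq_mul, ← integral_rpow_mul_one_sub_rpow hp hq, ← intervalIntegral.integral_const_mul,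
    ← intervalIntegral.integral_mul_const]
  refine intervalIntegral.integral_congr fun u hu => ?_
  rw [uIcc_of_le zero_le_one] at hu
  rw [← mul_one_sub, Real.mul_rpow hw.le hu.1, Real.mul_rpow hw.le (sub_nonneg.2 hu.2),
    show p + q - 1 = 1 + (p - 1) + (q - 1) by ring, Real.rpow_add hw, Real.rpow_add hw,
    Real.rpow_one]
  ring

lemma hasSum_intervalIntegral_mul_of_summable_abs {a b : ℝ} (hab : a ≤ b) {c : ℕ → ℝ}
    {g : ℕ → ℝ → ℝ} {h F : ℝ → ℝ} (hc : Summable fun i => |c i|)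
    (hg : ∀ i, ContinuousOn (g i) (Ioo a b)) (hgh : ∀ i, ∀ x ∈ Ioo a b, |g i x| ≤ h x)
    (hh : IntervalIntegrable h volume a b)
    (hF : ∀ x ∈ Ioo a b, HasSum (fun i => c i * g i x) (F x)) :
    HasSum (fun i => c i * ∫ x in a..b, g i x) (∫ x in a..b, F x) := by
  have hae {P : ℝ → Prop} (hP : ∀ x ∈ Ioo a b, P x) : ∀ᵐ x, x ∈ uIoc a b → P x := by
    rw [uIoc_of_le hab]
    filter_upwards [Ioo_ae_eq_Ioc (a := a) (b := b) (μ := volume)] with x hx hxI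
    exact hP x (hx.mpr hxI)
  simp_rw [← intervalIntegral.integral_const_mul]
  refine intervalIntegral.hasSum_integral_of_dominated_convergence (fun i x => |c i| * h x)
    (fun i => ?_) (fun i => hae fun x hx => ?_) (hae fun x _ => hc.mul_right (h x)) ?_ (hae hF)
  · rw [uIoc_of_le hab, Measure.restrict_congr_set Ioo_ae_eq_Ioc.symm]
    exact ((hg i).const_smul (c i)).aestronglyMeasurable measurableSet_Ioo
  · rw [Real.norm_eq_abs, abs_mul]
    exact mul_le_mul_of_nonneg_left (hgh i x hx) (abs_nonneg _)
  · simp_rw [tsum_mul_right]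
    exact hh.const_mul _

lemma hasSum_integral_rpow_mul_sub_rpow_mul_sub_rpow {p q s w : ℝ} (hp : 0 < p) (hq : 0 < q)
    (hs : 1 < s) (hw : 0 < w) (hw1 : w ≤ 1) (γ : ℝ) :
    HasSum (fun i : ℕ => powSubCoeff s γ i * (Beta2 (p + i) q * w ^ (p + q + i - 1)))
      (∫ u in (0 : ℝ)..w, u ^ (p - 1) * (s - u) ^ (γ - 1) * (w - u) ^ (q - 1)) := by
  have hint (i : ℕ) :
      ∫ u in (0 : ℝ)..w, u ^ (p + i - 1) * (w - u) ^ (q - 1) =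
        Beta2 (p + i) q * w ^ (p + q + i - 1) := by
    rw [integral_rpow_mul_sub_rpow (by positivity) hq hw, add_right_comm p]
  simp_rw [← hint]
  refine hasSum_intervalIntegral_mul_of_summable_abs hw.le (summable_abs_powSubCoeff hs γ)
    (fun i => ?_) (fun i u hu => ?_) (intervalIntegrable_rpow_mul_sub_rpow hp hq hw) fun u hu => ?_
  · exact (continuousOn_id.rpow_const fun u hu => Or.inl hu.1.ne').mul
      ((continuousOn_const.sub continuousOn_id).rpow_const fun u hu => Or.inl (sub_pos.2 hu.2).ne')
  · have hwu : 0 ≤ w - u := (sub_pos.2 hu.2).le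
    rw [abs_of_nonneg (by have := hu.1; positivity)]
    refine mul_le_mul_of_nonneg_right ?_ (Real.rpow_nonneg hwu _)
    exact Real.rpow_le_rpow_of_exponent_ge hu.1 (hu.2.le.trans hw1) (by simp)
  · have hus : |u| < s := by rw [abs_of_pos hu.1]; linarith [hu.2]
    have h := (hasSum_powSubCoeff_mul_pow (by linarith) hus γ).mul_right
      (u ^ (p - 1) * (w - u) ^ (q - 1))
    rw [← mul_assoc, mul_comm ((s - u) ^ _)] at h
    refine h.congr_fun fun i => ?_
    rw [add_sub_right_comm, Real.rpow_add hu.1, Real.rpow_natCast]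
    ring

lemma hasSum_integral_mul_rpow_mul_sub_rpow {A : ℕ → ℝ} (hA : Summable fun i => |A i|)
    {κ b t : ℝ} (hκ : 0 < κ) (hb : 0 < b) (ht : 1 < t) (d : ℝ) {F : ℝ → ℝ}
    (hF : ∀ v ∈ Ioo (0 : ℝ) 1, HasSum (fun i : ℕ => A i * (1 - v) ^ (κ + i - 1)) (F v)) :
    HasSum (fun i : ℕ => A i * ∑' j : ℕ, powSubCoeff t d j * Beta2 (b + j) (κ + i))
      (∫ v in (0 : ℝ)..1, F v * v ^ (b - 1) * (t - v) ^ (d - 1)) := by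
  have hint (i : ℕ) :
      ∫ v in (0 : ℝ)..1, v ^ (b - 1) * (t - v) ^ (d - 1) * (1 - v) ^ (κ + i - 1) =
      ∑' j : ℕ, powSubCoeff t d j * Beta2 (b + j) (κ + i) := by
    have := hasSum_integral_rpow_mul_sub_rpow_mul_sub_rpow hb (q := κ + i) (by positivity) ht
      one_pos le_rfl d
    simp only [Real.one_rpow, mul_one] at this
    exact this.tsum_eq.symm
  have htv_cont : ContinuousOn (fun v => (t - v) ^ (d - 1)) (Icc 0 1) :=
    (continuousOn_const.sub continuousOn_id).rpow_const
      fun v hv => Or.inl (sub_pos.2 (show v < t by linarith [hv.2])).ne'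
  simp_rw [← hint]
  refine hasSum_intervalIntegral_mul_of_summable_abs zero_le_one hA
    (h := fun v => v ^ (b - 1) * (t - v) ^ (d - 1) * (1 - v) ^ (κ - 1)) (fun i => ?_)
    (fun i v hv => ?_) ?_ fun v hv => ?_
  · refine ((continuousOn_id.rpow_const fun v hv => Or.inl hv.1.ne').mul
      (htv_cont.mono Ioo_subset_Icc_self)).mul ?_
    exact (continuousOn_const.sub continuousOn_id).rpow_const
      fun v hv => Or.inl (sub_pos.2 hv.2).ne'
  · have h1v : 0 < 1 - v := sub_pos.2 hv.2
    have htv : 0 < t - v := by linarith [hv.2]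
    rw [abs_of_nonneg (by have := hv.1; positivity)]
    refine mul_le_mul_of_nonneg_left ?_ (by have := hv.1; positivity)
    exact Real.rpow_le_rpow_of_exponent_ge h1v (by linarith [hv.1]) (by simp)
  · have := (intervalIntegrable_rpow_mul_sub_rpow hb hκ one_pos).mul_continuousOn
      (by rwa [uIcc_of_le zero_le_one])
    simpa only [mul_right_comm] using this
  · rw [mul_assoc]
    refine ((hF v hv).mul_right (v ^ (b - 1) * (t - v) ^ (d - 1))).congr_fun fun i => ?_
    ring

lemma summable_abs_powSubCoeff_mul_Beta2 {s p q : ℝ} (hs : 1 < s) (hp : 0 < p) (hq : 0 < q)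
    (γ : ℝ) : Summable fun i : ℕ => |powSubCoeff s γ i * Beta2 (p + i) q| := by
  refine ((summable_abs_powSubCoeff hs γ).mul_right (Beta2 p q)).of_nonneg_of_le
    (fun i => abs_nonneg _) fun i => ?_
  rw [abs_mul, abs_of_pos (Beta2_pos (by positivity) hq)]
  exact mul_le_mul_of_nonneg_left (Beta2_add_nat_le hp hq i) (abs_nonneg _)

lemma powSubCoeff_mul_Beta2_mul_powSubCoeff_mul_Beta2 {a b q s t : ℝ} (ha : 0 < a) (hb : 0 < b)
    (hq : 0 < q) (hs : 0 < s) (ht : 0 < t) (c d : ℝ) (i j : ℕ) :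
    powSubCoeff s c i * Beta2 (a + i) q * (powSubCoeff t d j * Beta2 (b + j) (a + q + i)) =
      Beta3 a b q * s ^ (c - 1) * t ^ (d - 1) *
        (poch a i * poch b j * poch (1 - c) i * poch (1 - d) j /
          (poch (a + b + q) (i + j) * i.factorial * j.factorial) * (1 / s) ^ i * (1 / t) ^ j) := by
  rw [mul_mul_mul_comm, Beta2_mul_Beta2_add_nat ha hb hq, powSubCoeff, powSubCoeff, one_div_pow,
    one_div_pow]
  have := (poch_pos (by linarith : 0 < a + b + q) (i + j)).ne'
  have : (i.factorial : ℝ) ≠ 0 := by positivity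
  have : (j.factorial : ℝ) ≠ 0 := by positivity
  field_simp

/-- The integral `I₂(s,t)` evaluates to
`B(a,b,1-e) s^{c-1} t^{d-1} F₃(a, b; 1-c, 1-d; a+b+1-e; 1/s, 1/t)`. -/
theorem stmt10 (a b c d e : ℝ) (ha : 0 < a) (hb : 0 < b) (he : e < 1)
    (s t : ℝ) (hs : 1 < s) (ht : 1 < t) :
    (∫ v in (0:ℝ)..1,
        (∫ u in (0:ℝ)..(1 - v), u ^ (a - 1) * (s - u) ^ (c - 1) * (1 - u - v) ^ (-e)) *
          v ^ (b - 1) * (t - v) ^ (d - 1))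
      = Beta3 a b (1 - e) * s ^ (c - 1) * t ^ (d - 1) *
          F3 a b (1 - c) (1 - d) (a + b + 1 - e) (1 / s) (1 / t) := by
  have hq : 0 < 1 - e := sub_pos.2 he
  have hinner : ∀ v ∈ Ioo (0 : ℝ) 1, HasSum
      (fun i : ℕ => powSubCoeff s c i * Beta2 (a + i) (1 - e) * (1 - v) ^ (a + (1 - e) + i - 1))
      (∫ u in (0 : ℝ)..(1 - v), u ^ (a - 1) * (s - u) ^ (c - 1) * (1 - u - v) ^ (-e)) := by
    intro v hv
    have := hasSum_integral_rpow_mul_sub_rpow_mul_sub_rpow ha hq hs (sub_pos.2 hv.2)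
      (by linarith [hv.1]) c
    simpa only [sub_right_comm (1 : ℝ) v, sub_sub_cancel_left, ← mul_assoc] using this
  rw [← (hasSum_integral_mul_rpow_mul_sub_rpow (summable_abs_powSubCoeff_mul_Beta2 hs ha hq c)
    (by positivity) hb ht d hinner).tsum_eq, F3, ← tsum_mul_left]
  refine tsum_congr fun i => ?_
  rw [← tsum_mul_left, ← tsum_mul_left]
  refine tsum_congr fun j => ?_
  rw [powSubCoeff_mul_Beta2_mul_powSubCoeff_mul_Beta2 ha hb hq (by linarith) (by linarith),
    add_sub_assoc (a + b)]
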